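/- arXiv:2604.02069 — 7 statements merged into one kernel-verified Lean document; each statement's English description precedes it below -/
import Mathlib

section
/- Let V : [0,∞) → ℝ solve the scalar ODE V' = -k₁ V^(1-1/μ) - k₂ V^(1+1/μ) with k₁, k₂ > 0, μ > 1, and initial condition V(0) > 0. Then V reaches 0 at a time T satisfying T ≤ μπ/(2√(k₁k₂)). -/
/-!
The function `Φ(v) = μ / √(k₁k₂) · arctan (√(k₂/k₁) · v^(1/μ))` satisfies
`Φ'(v) = 1 / (k₁ v^(1-1/μ) + k₂ v^(1+1/μ))`, so along a positive solution `Φ ∘ V` decreases at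
unit rate. Since `0 < Φ < μπ / (2√(k₁k₂))`, the solution cannot stay positive on the whole
interval `[0, μπ / (2√(k₁k₂))]`.
-/

open Real Set

/-- The time the flow needs to bring the value `v > 0` down to `0`. -/
noncomputable def settlingTime (k₁ k₂ μ v : ℝ) : ℝ :=
  μ / √(k₁ * k₂) * arctan (√(k₂ / k₁) * v ^ (1 / μ))

section SettlingTime

variable {k₁ k₂ μ v : ℝ}

theorem settlingTime_pos (hk₁ : 0 < k₁) (hk₂ : 0 < k₂) (hμ : 0 < μ) (hv : 0 < v) :
    0 < settlingTime k₁ k₂ μ v := by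
  unfold settlingTime
  have : 0 < arctan (√(k₂ / k₁) * v ^ (1 / μ)) := arctan_pos.2 (by positivity)
  positivity

theorem settlingTime_lt (hk₁ : 0 < k₁) (hk₂ : 0 < k₂) (hμ : 0 < μ) :
    settlingTime k₁ k₂ μ v < μ * π / (2 * √(k₁ * k₂)) := by
  have hcoef : 0 < μ / √(k₁ * k₂) := by positivity
  calc settlingTime k₁ k₂ μ v < μ / √(k₁ * k₂) * (π / 2) :=
        mul_lt_mul_of_pos_left (arctan_lt_pi_div_two _) hcoef
    _ = μ * π / (2 * √(k₁ * k₂)) := by field_simp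

theorem hasDerivAt_settlingTime (hk₁ : 0 < k₁) (hk₂ : 0 < k₂) (hμ : μ ≠ 0) (hv : 0 < v) :
    HasDerivAt (settlingTime k₁ k₂ μ) (k₁ * v ^ (1 - 1 / μ) + k₂ * v ^ (1 + 1 / μ))⁻¹ v := by
  set c := √(k₂ / k₁)
  have hc : 0 < c := by positivity
  have hc_sq : c ^ 2 = k₂ / k₁ := sq_sqrt (by positivity)
  have hc_mul : c * k₁ = √(k₁ * k₂) := by
    rw [← sqrt_sq (by positivity : 0 ≤ c * k₁), mul_pow, hc_sq]
    field_simp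
  refine ((((hasDerivAt_rpow_const (p := 1 / μ) (Or.inl hv.ne')).const_mul c).arctan
    ).const_mul (μ / √(k₁ * k₂))).congr_deriv ?_
  rw [rpow_sub hv, rpow_add hv, rpow_sub hv, rpow_one, ← hc_mul]
  field_simp
  rw [hc_sq]
  field_simp

end SettlingTime

theorem eq_add_mul_sub_of_hasDerivAt_const {W : ℝ → ℝ} {m a b : ℝ} (hab : a ≤ b)
    (hW : ∀ t ∈ Icc a b, HasDerivAt W m t) : W b = W a + m * (b - a) := by
  have hline : ∀ t, HasDerivAt (fun t => W a + m * (t - a)) m t := fun t => by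
    simpa using ((hasDerivAt_id t).sub_const a).const_mul m |>.const_add (W a)
  refine eq_of_has_deriv_right_eq (f' := fun _ => m)
    (fun t ht => (hW t (Ico_subset_Icc_self ht)).hasDerivWithinAt)
    (fun t _ => (hline t).hasDerivWithinAt)
    (fun t ht => (hW t ht).continuousAt.continuousWithinAt)
    (fun t _ => (hline t).continuousAt.continuousWithinAt) (by simp) b ⟨hab, le_rfl⟩

theorem stmt_0_general (k₁ k₂ μ : ℝ) (hk₁ : 0 < k₁) (hk₂ : 0 < k₂) (hμ : 1 < μ)
    (V : ℝ → ℝ) (hVnn : ∀ t, 0 ≤ t → 0 ≤ V t)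
    (hODE : ∀ t, 0 ≤ t →
      HasDerivAt V (-k₁ * V t ^ (1 - 1/μ) - k₂ * V t ^ (1 + 1/μ)) t) :
    ∃ T, 0 ≤ T ∧ T ≤ μ * Real.pi / (2 * Real.sqrt (k₁ * k₂)) ∧ V T = 0 := by
  by_contra! hcon
  have hμ₀ : 0 < μ := one_pos.trans hμ
  set T := μ * π / (2 * √(k₁ * k₂))
  have hT : 0 ≤ T := by positivity
  have hVpos : ∀ t ∈ Icc 0 T, 0 < V t := fun t ht =>
    (hVnn t ht.1).lt_of_ne' (hcon t ht.1 ht.2)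
  have hdecay : ∀ t ∈ Icc 0 T, HasDerivAt (fun t => settlingTime k₁ k₂ μ (V t)) (-1) t := by
    intro t ht
    have hrate : 0 < k₁ * V t ^ (1 - 1 / μ) + k₂ * V t ^ (1 + 1 / μ) := by
      have := hVpos t ht; positivity
    refine ((hasDerivAt_settlingTime hk₁ hk₂ hμ₀.ne' (hVpos t ht)).comp t
      (hODE t ht.1)).congr_deriv ?_
    rw [neg_mul, ← neg_add', mul_neg, inv_mul_cancel₀ hrate.ne']
  have hfinal := eq_add_mul_sub_of_hasDerivAt_const hT hdecay
  linarith [settlingTime_pos hk₁ hk₂ hμ₀ (hVpos T ⟨hT, le_rfl⟩),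
    settlingTime_lt (v := V 0) hk₁ hk₂ hμ₀]

/-- Fixed-time settling bound for the scalar ODE
`V' = -k₁ V^(1-1/μ) - k₂ V^(1+1/μ)` with `k₁, k₂ > 0`, `μ > 1`, `V(0) > 0`:
`V` reaches `0` at some time `T ≤ μπ/(2√(k₁k₂))`. -/
theorem stmt_0 (k₁ k₂ μ : ℝ) (hk₁ : 0 < k₁) (hk₂ : 0 < k₂) (hμ : 1 < μ)
    (V : ℝ → ℝ) (hV0 : 0 < V 0) (hVnn : ∀ t, 0 ≤ t → 0 ≤ V t)
    (hODE : ∀ t, 0 ≤ t →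
      HasDerivAt V (-k₁ * V t ^ (1 - 1/μ) - k₂ * V t ^ (1 + 1/μ)) t) :
    ∃ T, 0 ≤ T ∧ T ≤ μ * Real.pi / (2 * Real.sqrt (k₁ * k₂)) ∧ V T = 0 :=
  stmt_0_general k₁ k₂ μ hk₁ hk₂ hμ V hVnn hODE
end

section
/- For the ODE V' = -k₁ V^(1-1/μ) - k₂ V^(1+1/μ) with V(0) = V₀ > 0, the substitution W = V^(1/μ) yields the exact settling time T = (μ/√(k₁k₂)) · arctan(√(k₂/k₁) · V₀^(1/μ)). -/
/-! The substitution `W = V ^ (1/μ)` turns the equation into the Riccati equation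
`W' = -(k₁ + k₂ W²) / μ`, along which `(μ / √(k₁k₂)) · arctan (√(k₂/k₁) · W)` decreases at unit
speed. Since `W` runs from `V₀ ^ (1/μ)` down to `0` on `[0, T]`, its value at `V₀` equals `T`. -/

open Real Set

lemma hasDerivAt_rpow_of_hasDerivAt_neg_rpow_sub_rpow {V : ℝ → ℝ} {k₁ k₂ p t : ℝ}
    (hVt : 0 < V t) (hV : HasDerivAt V (-k₁ * V t ^ (1 - p) - k₂ * V t ^ (1 + p)) t) :
    HasDerivAt (fun s => V s ^ p) (-p * (k₁ + k₂ * (V t ^ p) ^ 2)) t := by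
  convert hV.rpow_const (p := p) (Or.inl hVt.ne') using 1
  have h₁ : V t ^ (p - 1) * V t ^ (1 - p) = 1 := by
    rw [← rpow_add hVt]; simp
  have h₂ : V t ^ (p - 1) * V t ^ (1 + p) = (V t ^ p) ^ 2 := by
    rw [← rpow_add hVt, ← rpow_natCast, ← rpow_mul hVt.le]; ring_nf
  linear_combination (p * k₁) * h₁ + p * k₂ * h₂

lemma hasDerivAt_arctan_of_hasDerivAt_riccati {W : ℝ → ℝ} {a b c t : ℝ} (ha : 0 < a)
    (hb : 0 ≤ b) (hW : HasDerivAt W (-c * (a + b * W t ^ 2)) t) :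
    HasDerivAt (fun s => arctan (√(b / a) * W s)) (-c * √(a * b)) t := by
  convert (hW.const_mul √(b / a)).arctan using 1
  have hsq : √(b / a) ^ 2 = b / a := sq_sqrt (div_nonneg hb ha.le)
  have hab : √(a * b) = √(b / a) * a := by
    nth_rw 3 [← sqrt_sq ha.le]
    rw [← sqrt_mul (div_nonneg hb ha.le)]
    congr 1
    field_simp
  rw [hab, mul_pow, hsq]
  field_simp

lemma eq_add_mul_sub_of_hasDerivAt {f : ℝ → ℝ} {a b c : ℝ} (hab : a ≤ b)
    (hf : ContinuousOn f (Icc a b)) (hf' : ∀ t ∈ Ico a b, HasDerivAt f c t) :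
    f b = f a + c * (b - a) :=
  eq_of_has_deriv_right_eq (f' := fun _ => c) (g := fun t => f a + c * (t - a))
    (fun t ht => (hf' t ht).hasDerivWithinAt)
    (fun t _ => ((((hasDerivAt_id t).sub_const a).const_mul c).const_add (f a)).hasDerivWithinAt
      |>.congr_deriv (mul_one c))
    hf (by fun_prop) (by simp) b (right_mem_Icc.mpr hab)

theorem stmt_1_general (k₁ k₂ μ V₀ T : ℝ) (hk₁ : 0 < k₁) (hk₂ : 0 < k₂) (hμ : 1 < μ)
    (hT : 0 ≤ T) (V : ℝ → ℝ) (hV₀ : V 0 = V₀)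
    (hpos : ∀ t ∈ Set.Ico (0:ℝ) T, 0 < V t)
    (hODE : ∀ t ∈ Set.Ico (0:ℝ) T,
      HasDerivAt V (-k₁ * V t ^ (1 - 1/μ) - k₂ * V t ^ (1 + 1/μ)) t)
    (hcont : ContinuousOn V (Set.Icc 0 T))
    (hVT : V T = 0) :
    T = μ / Real.sqrt (k₁ * k₂) * Real.arctan (Real.sqrt (k₂ / k₁) * V₀ ^ (1/μ)) := by
  have hμ₀ : 0 < μ := by linarith
  set F : ℝ → ℝ := fun t => μ / √(k₁ * k₂) * arctan (√(k₂ / k₁) * V t ^ (1 / μ)) with hF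
  have hF' : ∀ t ∈ Ico 0 T, HasDerivAt F (-1) t := fun t ht => by
    have hW := hasDerivAt_rpow_of_hasDerivAt_neg_rpow_sub_rpow (hpos t ht) (hODE t ht)
    refine ((hasDerivAt_arctan_of_hasDerivAt_riccati hk₁ hk₂.le hW).const_mul
      (μ / √(k₁ * k₂))).congr_deriv ?_
    have : 0 < √(k₁ * k₂) := by positivity
    field_simp
  have hFc : ContinuousOn F (Icc 0 T) :=
    continuousOn_const.mul <| continuous_arctan.comp_continuousOn <|
      continuousOn_const.mul <| hcont.rpow_const fun _ _ => Or.inr (by positivity)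
  have hFT := eq_add_mul_sub_of_hasDerivAt hT hFc hF'
  simp only [hF, hVT, hV₀, zero_rpow (one_div_pos.mpr hμ₀).ne', mul_zero, arctan_zero] at hFT
  linarith

/-- Exact settling time of `V' = -k₁ V^(1-1/μ) - k₂ V^(1+1/μ)`, `V(0) = V₀ > 0`:
`T = (μ/√(k₁k₂)) · arctan(√(k₂/k₁) · V₀^(1/μ))`. -/
theorem stmt_1 (k₁ k₂ μ V₀ T : ℝ) (hk₁ : 0 < k₁) (hk₂ : 0 < k₂) (hμ : 1 < μ)
    (hT : 0 ≤ T) (V : ℝ → ℝ) (hV₀ : V 0 = V₀) (hV₀pos : 0 < V₀)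
    (hpos : ∀ t ∈ Set.Ico (0:ℝ) T, 0 < V t)
    (hODE : ∀ t ∈ Set.Ico (0:ℝ) T,
      HasDerivAt V (-k₁ * V t ^ (1 - 1/μ) - k₂ * V t ^ (1 + 1/μ)) t)
    (hcont : ContinuousOn V (Set.Icc 0 T))
    (hVT : V T = 0) :
    T = μ / Real.sqrt (k₁ * k₂) * Real.arctan (Real.sqrt (k₂ / k₁) * V₀ ^ (1/μ)) :=
  stmt_1_general k₁ k₂ μ V₀ T hk₁ hk₂ hμ hT V hV₀ hpos hODE hcont hVT
end

section
/- Let y : [0,∞) → ℝⁿ solve ẏ = -k·y·(1/‖y‖ + ‖y‖) for y ≠ 0 with k > 0. Then V(y) = ½‖y‖² satisfies V̇ = -k(2V)^(1/2) - k(2V)^(3/2) along trajectories, and consequently y(t) reaches 0 within time π/(2k) for every initial condition y(0) ∈ ℝⁿ. -/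
/-!
Along a trajectory away from the origin, `ẏ = c • y` with `c = -k (1/‖y‖ + ‖y‖)` gives
`d‖y‖/dt = c ‖y‖ = -k (1 + ‖y‖²)`, which yields both the Lyapunov identity (`(2V)^(1/2) = ‖y‖`,
`(2V)^(3/2) = ‖y‖³`) and the conservation of `arctan ‖y t‖ + k t`. Hence `y` cannot stay away
from `0` beyond `arctan ‖y 0‖ / k < π / (2k)`.
-/

open Real Set

section RadialFlow

variable {E : Type*} [NormedAddCommGroup E] [InnerProductSpace ℝ E] {y : ℝ → E} {c t : ℝ}

theorem hasDerivAt_norm_sq_of_hasDerivAt_smul_self (hy : HasDerivAt y (c • y t) t) :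
    HasDerivAt (fun s => ‖y s‖ ^ 2) (2 * c * ‖y t‖ ^ 2) t := by
  convert hy.norm_sq using 1
  rw [real_inner_smul_right, real_inner_self_eq_norm_sq, mul_assoc]

theorem hasDerivAt_norm_of_hasDerivAt_smul_self (hy : HasDerivAt y (c • y t) t) (h0 : y t ≠ 0) :
    HasDerivAt (fun s => ‖y s‖) (c * ‖y t‖) t := by
  have hpos : 0 < ‖y t‖ := norm_pos_iff.mpr h0
  have hsqrt := (hasDerivAt_sqrt (by positivity)).comp t
    (hasDerivAt_norm_sq_of_hasDerivAt_smul_self hy)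
  simp only [Function.comp_def, sqrt_sq (norm_nonneg _)] at hsqrt
  refine hsqrt.congr_deriv ?_
  field_simp

end RadialFlow

theorem sq_rpow_half_mul {r : ℝ} (hr : 0 ≤ r) (p : ℝ) : (r ^ 2) ^ (p / 2) = r ^ p := by
  rw [← rpow_natCast, ← rpow_mul hr]
  ring_nf

theorem arctan_add_mul_eq_of_hasDerivAt {r : ℝ → ℝ} {k T : ℝ} (hT : 0 ≤ T)
    (hr : ∀ s ∈ Icc 0 T, HasDerivAt r (-(k * (1 + r s ^ 2))) s) :
    arctan (r T) + k * T = arctan (r 0) := by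
  have hf : ∀ s ∈ Icc 0 T, HasDerivAt (fun u => arctan (r u) + k * u) 0 s := by
    intro s hs
    refine (((hasDerivAt_arctan (r s)).comp s (hr s hs)).add
      ((hasDerivAt_id s).const_mul k)).congr_deriv ?_
    field_simp
    ring
  have hconst := constant_of_has_deriv_right_zero
    (fun s hs => (hf s hs).continuousAt.continuousWithinAt)
    (fun s hs => (hf s (Ico_subset_Icc_self hs)).hasDerivWithinAt) T ⟨hT, le_rfl⟩
  simpa using hconst

theorem eq_zero_at_arctan_norm_div {F : Type*} [NormedAddCommGroup F] {y : ℝ → F} {k : ℝ}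
    (hk : 0 < k)
    (hnorm : ∀ t, 0 ≤ t → y t ≠ 0 → HasDerivAt (fun s => ‖y s‖) (-(k * (1 + ‖y t‖ ^ 2))) t)
    (hstat : ∀ t, 0 ≤ t → y t = 0 → ∀ s, t ≤ s → y s = 0) :
    y (arctan ‖y 0‖ / k) = 0 := by
  set T := arctan ‖y 0‖ / k
  have hT : 0 ≤ T := div_nonneg (arctan_nonneg.mpr (norm_nonneg _)) hk.le
  by_contra hyT
  have hne : ∀ s ∈ Icc 0 T, y s ≠ 0 := fun s hs h0 => hyT (hstat s hs.1 h0 T hs.2)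
  have hconst := arctan_add_mul_eq_of_hasDerivAt hT fun s hs => hnorm s hs.1 (hne s hs)
  rw [mul_div_cancel₀ _ hk.ne', add_eq_right, arctan_eq_zero_iff, norm_eq_zero] at hconst
  exact hyT hconst

/-- For the flow `ẏ = -k·y·(1/‖y‖ + ‖y‖)` (away from `0`) with `k > 0`,
the Lyapunov function `V = ½‖y‖²` satisfies `V̇ = -k(2V)^(1/2) - k(2V)^(3/2)` along
trajectories, and `y` reaches `0` within time `π/(2k)`. -/
theorem stmt_4 (n : ℕ) (k : ℝ) (hk : 0 < k)
    (y : ℝ → EuclideanSpace ℝ (Fin n))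
    (hODE : ∀ t, 0 ≤ t → y t ≠ 0 →
      HasDerivAt y ((-(k * (1 / ‖y t‖ + ‖y t‖))) • y t) t)
    (hstat : ∀ t, 0 ≤ t → y t = 0 → ∀ s, t ≤ s → y s = 0) :
    (∀ t, 0 ≤ t → y t ≠ 0 →
      HasDerivAt (fun s => (1/2) * ‖y s‖^2)
        (-(k * (2 * ((1/2) * ‖y t‖^2)) ^ ((1:ℝ)/2))
          - k * (2 * ((1/2) * ‖y t‖^2)) ^ ((3:ℝ)/2)) t) ∧
    ∃ T, 0 ≤ T ∧ T ≤ Real.pi / (2 * k) ∧ y T = 0 := by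
  constructor
  · intro t ht hy
    have hpos : 0 < ‖y t‖ := norm_pos_iff.mpr hy
    refine ((hasDerivAt_norm_sq_of_hasDerivAt_smul_self (hODE t ht hy)).const_mul
      (1 / 2 : ℝ)).congr_deriv ?_
    rw [show 2 * ((1 / 2) * ‖y t‖ ^ 2) = ‖y t‖ ^ 2 by ring, sq_rpow_half_mul hpos.le,
      sq_rpow_half_mul hpos.le, rpow_one, show (3 : ℝ) = (3 : ℕ) by norm_num, rpow_natCast]
    field_simp
    ring
  · have hnorm : ∀ t, 0 ≤ t → y t ≠ 0 →
        HasDerivAt (fun s => ‖y s‖) (-(k * (1 + ‖y t‖ ^ 2))) t := by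
      intro t ht hy
      refine (hasDerivAt_norm_of_hasDerivAt_smul_self (hODE t ht hy) hy).congr_deriv ?_
      field_simp [norm_ne_zero_iff.mpr hy]
    refine ⟨arctan ‖y 0‖ / k, div_nonneg (arctan_nonneg.mpr (norm_nonneg _)) hk.le, ?_,
      eq_zero_at_arctan_norm_div hk hnorm hstat⟩
    rw [div_le_div_iff₀ hk (by positivity)]
    nlinarith [arctan_lt_pi_div_two ‖y 0‖]
end

section
/- Let f : ℝⁿ → ℝ be twice continuously differentiable and strongly convex with unique minimizer x*. If x(t) solves the Newton flow (∇²f(x))ẋ = -k∇f(x)·(1/‖∇f(x)‖ + ‖∇f(x)‖) with k = π/(2T_p), then x(t) converges to x* within time T_p for every initial point x(0) ∈ ℝⁿ. -/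
/-!
Along the flow, `y = ∇f(x)` solves `ẏ = -k y (1/‖y‖ + ‖y‖)`. While `y ≠ 0`, `arctan ‖y‖` then
decreases at the constant rate `k`; it starts below `π/2`, so `y` must vanish by time
`π/(2k) = T_p`. Since `‖y‖` never increases, `y` stays zero afterwards, and by strict convexity
the only critical point of `f` is its minimizer `x*`.
-/

open Set Real InnerProductSpace
open scoped RealInnerProductSpace

theorem ConvexOn.isMinOn_of_hasFDerivAt_eq_zero {E : Type*} [NormedAddCommGroup E]
    [NormedSpace ℝ E] {f : E → ℝ} {p : E} (hf : ConvexOn ℝ univ f)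
    (hp : HasFDerivAt f (0 : E →L[ℝ] ℝ) p) : IsMinOn f univ p := by
  intro q _
  let g : ℝ →ᵃ[ℝ] E := AffineMap.lineMap p q
  have hg : ConvexOn ℝ univ (f ∘ g) := hf.comp_affineMap g
  have hg' : HasDerivAt (f ∘ g) 0 0 := by
    have hp' : HasFDerivAt f (0 : E →L[ℝ] ℝ) (g 0) := by simpa [g] using hp
    simpa using hp'.comp_hasDerivAt (0 : ℝ) AffineMap.hasDerivAt_lineMap
  simpa [slope_def_field, g] using hg.le_slope_of_hasDerivAt (mem_univ 0) (mem_univ 1) one_pos hg'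

theorem ContDiff.gradient {F : Type*} [NormedAddCommGroup F] [InnerProductSpace ℝ F]
    [CompleteSpace F] {f : F → ℝ} {m n : WithTop ℕ∞} (hf : ContDiff ℝ n f) (hmn : m + 1 ≤ n) :
    ContDiff ℝ m (gradient f) :=
  (toDual ℝ F).symm.toContinuousLinearEquiv.contDiff.comp (hf.fderiv_right hmn)

section FiniteTimeFlow

variable {E : Type*} [NormedAddCommGroup E] [InnerProductSpace ℝ E]

theorem HasDerivAt.norm {y : ℝ → E} {y' : E} {t : ℝ} (hy : HasDerivAt y y' t) (h0 : y t ≠ 0) :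
    HasDerivAt (fun s => ‖y s‖) (⟪y t, y'⟫_ℝ / ‖y t‖) t := by
  have hsq : 0 < ‖y t‖ ^ 2 := by positivity
  convert hy.norm_sq.sqrt hsq.ne' using 1
  · simp only [sqrt_sq (norm_nonneg _)]
  · rw [sqrt_sq (norm_nonneg _)]
    ring

theorem norm_antitoneOn_of_hasDerivAt_smul_self {s : Set ℝ} (hs : Convex ℝ s) {y : ℝ → E}
    {c : ℝ → ℝ} (hy : ∀ t ∈ s, HasDerivAt y (c t • y t) t) (hc : ∀ t ∈ s, c t ≤ 0) :
    AntitoneOn (fun t => ‖y t‖) s := by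
  have hsq : AntitoneOn (fun t => ‖y t‖ ^ 2) s := by
    refine antitoneOn_of_hasDerivWithinAt_nonpos hs
      (fun t ht => (hy t ht).norm_sq.continuousAt.continuousWithinAt)
      (fun t ht => (hy t (interior_subset ht)).norm_sq.hasDerivWithinAt) fun t ht => ?_
    have := hc t (interior_subset ht)
    rw [real_inner_smul_right, real_inner_self_eq_norm_sq]
    nlinarith [sq_nonneg ‖y t‖]
  intro a ha b hb hab
  exact (pow_le_pow_iff_left₀ (norm_nonneg _) (norm_nonneg _) two_ne_zero).1 (hsq ha hb hab)

noncomputable def finiteTimeField (k : ℝ) (v : E) : E := -(k * (1 / ‖v‖ + ‖v‖)) • v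

variable {y : ℝ → E} {k : ℝ}

theorem HasDerivAt.arctan_norm_of_finiteTimeField {t : ℝ}
    (hy : HasDerivAt y (finiteTimeField k (y t)) t) (h0 : y t ≠ 0) :
    HasDerivAt (fun s => Real.arctan ‖y s‖) (-k) t := by
  have hpos : 0 < ‖y t‖ := norm_pos_iff.2 h0
  convert (hy.norm h0).arctan using 1
  rw [finiteTimeField, real_inner_smul_right, real_inner_self_eq_norm_sq]
  field_simp

theorem exists_eq_zero_of_hasDerivAt_finiteTimeField (hk : 0 < k)
    (hy : ∀ t, 0 ≤ t → HasDerivAt y (finiteTimeField k (y t)) t) :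
    ∃ T ∈ Icc 0 (π / (2 * k)), y T = 0 := by
  by_contra! hne
  set τ := π / (2 * k)
  have hτ : τ ∈ Icc 0 τ := ⟨by positivity, le_rfl⟩
  have hderiv : ∀ t ∈ Icc 0 τ, HasDerivAt (fun s => arctan ‖y s‖ + k * s) 0 t := fun t ht =>
    (((hy t ht.1).arctan_norm_of_finiteTimeField (hne t ht)).add
      ((hasDerivAt_id' t).const_mul k)).congr_deriv (by ring)
  have hconst := constant_of_has_deriv_right_zero
    (fun t ht => (hderiv t ht).continuousAt.continuousWithinAt)
    (fun t ht => (hderiv t (Ico_subset_Icc_self ht)).hasDerivWithinAt) τ hτ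
  have hkτ : k * τ = π / 2 := by simp only [τ]; field_simp
  have h1 : 0 < arctan ‖y τ‖ := arctan_pos.2 (norm_pos_iff.2 (hne τ hτ))
  have h2 := arctan_lt_pi_div_two ‖y 0‖
  simp only [hkτ, mul_zero, add_zero] at hconst
  linarith

theorem exists_settlingTime_of_hasDerivAt_finiteTimeField (hk : 0 < k)
    (hy : ∀ t, 0 ≤ t → HasDerivAt y (finiteTimeField k (y t)) t) :
    ∃ T ∈ Icc 0 (π / (2 * k)), ∀ t, T ≤ t → y t = 0 := by
  obtain ⟨T, hT, hT0⟩ := exists_eq_zero_of_hasDerivAt_finiteTimeField hk hy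
  have hanti := norm_antitoneOn_of_hasDerivAt_smul_self (convex_Ici 0)
    (c := fun t => -(k * (1 / ‖y t‖ + ‖y t‖))) hy fun t _ => neg_nonpos.2 (by positivity)
  refine ⟨T, hT, fun t ht => norm_le_zero_iff.1 ?_⟩
  simpa [hT0] using hanti (mem_Ici.2 hT.1) (mem_Ici.2 (hT.1.trans ht)) ht

end FiniteTimeFlow

/-- Newton flow `(∇²f(x))ẋ = -k∇f(x)·(1/‖∇f(x)‖ + ‖∇f(x)‖)` for a twice continuously
differentiable strongly convex `f` with unique minimizer `xstar`, `k = π/(2 T_p)`: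
the trajectory reaches `xstar` within time `T_p`, for every initial point. -/
theorem stmt_5 (n : ℕ) (f : EuclideanSpace ℝ (Fin n) → ℝ) (m : ℝ) (hm : 0 < m)
    (hf : ContDiff ℝ 2 f) (hsc : StrongConvexOn Set.univ m f)
    (xstar : EuclideanSpace ℝ (Fin n)) (hmin : ∀ y, f xstar ≤ f y)
    (Tp k : ℝ) (hTp : 0 < Tp) (hk : k = Real.pi / (2 * Tp))
    (x x' : ℝ → EuclideanSpace ℝ (Fin n))
    (hx : ∀ t, 0 ≤ t → HasDerivAt x (x' t) t)
    (hflow : ∀ t, 0 ≤ t → gradient f (x t) ≠ 0 →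
      (fderiv ℝ (gradient f) (x t)) (x' t) =
        (-(k * (1 / ‖gradient f (x t)‖ + ‖gradient f (x t)‖))) • gradient f (x t))
    (hstat : ∀ t, 0 ≤ t → gradient f (x t) = 0 → x' t = 0) :
    ∃ T, 0 ≤ T ∧ T ≤ Tp ∧ ∀ t, T ≤ t → x t = xstar := by
  have hcrit : ∀ p, gradient f p = 0 → p = xstar := fun p hp => by
    have hfd := ((hf.differentiable two_ne_zero) p).hasGradientAt
    rw [hp, hasGradientAt_iff_hasFDerivAt, map_zero] at hfd
    exact (hsc.strictConvexOn hm).eq_of_isMinOn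
      ((hsc.strictConvexOn hm).convexOn.isMinOn_of_hasFDerivAt_eq_zero hfd)
      (fun q _ => hmin q) (mem_univ p) (mem_univ xstar)
  have hgrad : Differentiable ℝ (gradient f) :=
    (hf.gradient (m := 1) le_rfl).differentiable one_ne_zero
  have hy : ∀ t, 0 ≤ t → HasDerivAt (fun s => gradient f (x s))
      (finiteTimeField k (gradient f (x t))) t := fun t ht => by
    refine ((hgrad (x t)).hasFDerivAt.comp_hasDerivAt t (hx t ht)).congr_deriv ?_
    by_cases h0 : gradient f (x t) = 0
    · simp [finiteTimeField, h0, hstat t ht h0]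
    · exact hflow t ht h0
  have hkpos : 0 < k := by rw [hk]; positivity
  obtain ⟨T, ⟨hT0, hTle⟩, hsettle⟩ := exists_settlingTime_of_hasDerivAt_finiteTimeField hkpos hy
  have hkTp : π / (2 * k) = Tp := by rw [hk]; field_simp
  exact ⟨T, hT0, hkTp ▸ hTle, fun t ht => hcrit _ (hsettle t ht)⟩
end

section
/- Let (x₊*, x₋*) be the unique minimizer of g(x₊,x₋) = ‖A(x₊-x₋)-b‖² + τ·⟨1, x₊+x₋⟩ + ρ‖x₊‖² + ρ‖x₋‖² over x₊ ≥ 0, x₋ ≥ 0, with τ, ρ > 0. Then the complementarity condition x₊,ᵢ* · x₋,ᵢ* = 0 holds for all i = 1,…,n. -/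
/-- Complementarity at the minimizer of the nonnegative QP
`min_{x₊,x₋ ≥ 0} ‖A(x₊-x₋)-b‖² + τ⟨1, x₊+x₋⟩ + ρ‖x₊‖² + ρ‖x₋‖²`:
`x₊ᵢ* · x₋ᵢ* = 0` for all `i`. -/
theorem stmt_9 (m n : ℕ) (A : Matrix (Fin m) (Fin n) ℝ) (b : Fin m → ℝ) (τ ρ : ℝ)
    (hτ : 0 < τ) (hρ : 0 < ρ) (xp xm : Fin n → ℝ)
    (hxp : 0 ≤ xp) (hxm : 0 ≤ xm)
    (hmin : ∀ yp ym : Fin n → ℝ, 0 ≤ yp → 0 ≤ ym →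
      (∑ i, (A.mulVec (xp - xm) i - b i)^2 + τ * ∑ j, (xp j + xm j)
        + ρ * ∑ j, (xp j)^2 + ρ * ∑ j, (xm j)^2) ≤
      (∑ i, (A.mulVec (yp - ym) i - b i)^2 + τ * ∑ j, (yp j + ym j)
        + ρ * ∑ j, (yp j)^2 + ρ * ∑ j, (ym j)^2)) :
    ∀ i, xp i * xm i = 0 := by
  intro i
  by_contra h
  have hpi : 0 < xp i := lt_of_le_of_ne (hxp i) (by
    intro he; exact h (by rw [← he]; ring))
  have hmi : 0 < xm i := lt_of_le_of_ne (hxm i) (by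
    intro he; exact h (by rw [← he]; ring))
  set α := min (xp i) (xm i) with hα
  have hα0 : 0 < α := lt_min hpi hmi
  have hαp : α ≤ xp i := min_le_left _ _
  have hαm : α ≤ xm i := min_le_right _ _
  set yp := Function.update xp i (xp i - α) with hyp
  set ym := Function.update xm i (xm i - α) with hym
  have hyp0 : 0 ≤ yp := by
    intro j
    by_cases hj : j = i
    · subst hj; simp [hyp, sub_nonneg, hαp]
    · simp [hyp, Function.update_of_ne hj]; exact hxp j
  have hym0 : 0 ≤ ym := by
    intro j
    by_cases hj : j = i
    · subst hj; simp [hym, sub_nonneg, hαm]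
    · simp [hym, Function.update_of_ne hj]; exact hxm j
  have hdiff : yp - ym = xp - xm := by
    funext j
    by_cases hj : j = i
    · subst hj; simp [hyp, hym]
    · simp [hyp, hym, Function.update_of_ne hj]
  have key := hmin yp ym hyp0 hym0
  rw [hdiff] at key
  have hsum1 : ∑ j, (yp j + ym j) = (∑ j, (xp j + xm j)) - 2 * α := by
    have : ∀ j, yp j + ym j = Function.update (fun j => xp j + xm j) i (xp i + xm i - 2 * α) j := by
      intro j
      by_cases hj : j = i
      · subst hj; simp [hyp, hym]; ring
      · simp [hyp, hym, Function.update_of_ne hj]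
    rw [Finset.sum_congr rfl (fun j _ => this j),
      Finset.sum_update_of_mem (Finset.mem_univ i),
      ← Finset.add_sum_erase _ _ (Finset.mem_univ i)]
    rw [Finset.sdiff_singleton_eq_erase]; ring
  have hsum2 : ∑ j, (yp j)^2 = (∑ j, (xp j)^2) - (xp i)^2 + (xp i - α)^2 := by
    have : ∀ j, (yp j)^2 = Function.update (fun j => (xp j)^2) i ((xp i - α)^2) j := by
      intro j
      by_cases hj : j = i
      · subst hj; simp [hyp]
      · simp [hyp, Function.update_of_ne hj]
    rw [Finset.sum_congr rfl (fun j _ => this j),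
      Finset.sum_update_of_mem (Finset.mem_univ i),
      ← Finset.add_sum_erase _ _ (Finset.mem_univ i)]
    rw [Finset.sdiff_singleton_eq_erase]; ring
  have hsum3 : ∑ j, (ym j)^2 = (∑ j, (xm j)^2) - (xm i)^2 + (xm i - α)^2 := by
    have : ∀ j, (ym j)^2 = Function.update (fun j => (xm j)^2) i ((xm i - α)^2) j := by
      intro j
      by_cases hj : j = i
      · subst hj; simp [hym]
      · simp [hym, Function.update_of_ne hj]
    rw [Finset.sum_congr rfl (fun j _ => this j),
      Finset.sum_update_of_mem (Finset.mem_univ i),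
      ← Finset.add_sum_erase _ _ (Finset.mem_univ i)]
    rw [Finset.sdiff_singleton_eq_erase]; ring
  rw [hsum1, hsum2, hsum3] at key
  nlinarith [sq_nonneg α, mul_pos hτ hα0, mul_pos hρ hα0, mul_nonneg (mul_pos hρ hα0).le (sub_nonneg.2 hαp), mul_nonneg (mul_pos hρ hα0).le (sub_nonneg.2 hαm)]
end

section
/- Along the flow ẏ = -k·y·(1/‖y‖ + ‖y‖) with k > 0, the norm r(t) = ‖y(t)‖ satisfies the scalar ODE ṙ = -k(1 + r²), whose solution is r(t) = tan(arctan(r(0)) - kt), which reaches 0 exactly at time t* = arctan(r(0))/k < π/(2k). -/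
/-!
Since `ẏ` is a scalar multiple `c • y` of `y`, the norm satisfies `ṙ = ⟪y, ẏ⟫ / r = c r`, which
for `c = -k (1/r + r)` is `ṙ = -k (1 + r²)`. Then `arctan r + k t` has derivative zero, so it is
constant on `[0, T]`, which is the closed form; `arctan` takes values below `π / 2`.
-/

open Real Set
open scoped RealInnerProductSpace

theorem HasDerivAt.norm_of_ne_zero {E : Type*} [NormedAddCommGroup E] [InnerProductSpace ℝ E]
    {f : ℝ → E} {f' : E} {x : ℝ} (hf : HasDerivAt f f' x) (h0 : f x ≠ 0) :
    HasDerivAt (‖f ·‖) (⟪f x, f'⟫ / ‖f x‖) x := by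
  have hsqrt := hf.norm_sq.sqrt (by positivity)
  simp only [sqrt_sq (norm_nonneg _)] at hsqrt
  convert hsqrt using 1
  field_simp

theorem HasDerivAt.norm_of_smul_self {E : Type*} [NormedAddCommGroup E] [InnerProductSpace ℝ E]
    {y : ℝ → E} {c t : ℝ} (hy : HasDerivAt y (c • y t) t) (h0 : y t ≠ 0) :
    HasDerivAt (‖y ·‖) (c * ‖y t‖) t := by
  convert hy.norm_of_ne_zero h0 using 1
  rw [real_inner_smul_right, real_inner_self_eq_norm_sq]
  field_simp

theorem eq_tan_arctan_sub_of_hasDerivAt {r : ℝ → ℝ} {k T : ℝ}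
    (hr : ∀ t ∈ Icc 0 T, HasDerivAt r (-(k * (1 + r t ^ 2))) t) :
    ∀ t ∈ Icc 0 T, r t = tan (arctan (r 0) - k * t) := by
  have hderiv : ∀ t ∈ Icc 0 T, HasDerivAt (fun s => arctan (r s) + k * s) 0 t := by
    intro t ht
    refine ((hr t ht).arctan.add ((hasDerivAt_id' t).const_mul k)).congr_deriv ?_
    field_simp
    ring
  have hconst := constant_of_has_deriv_right_zero
    (fun t ht => (hderiv t ht).continuousAt.continuousWithinAt)
    (fun t ht => (hderiv t (Ico_subset_Icc_self ht)).hasDerivWithinAt)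
  intro t ht
  rw [← tan_arctan (r t)]
  congr 1
  linarith [hconst t ht]

theorem stmt_14_general (n : ℕ) (k T : ℝ) (hk : 0 < k)
    (y : ℝ → EuclideanSpace ℝ (Fin n))
    (hne : ∀ t ∈ Set.Icc (0:ℝ) T, y t ≠ 0)
    (hODE : ∀ t ∈ Set.Icc (0:ℝ) T,
      HasDerivAt y ((-(k * (1 / ‖y t‖ + ‖y t‖))) • y t) t) :
    (∀ t ∈ Set.Icc (0:ℝ) T,
      HasDerivAt (fun s => ‖y s‖) (-(k * (1 + ‖y t‖^2))) t) ∧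
    (∀ t ∈ Set.Icc (0:ℝ) T,
      ‖y t‖ = Real.tan (Real.arctan ‖y 0‖ - k * t)) ∧
    Real.tan (Real.arctan ‖y 0‖ - k * (Real.arctan ‖y 0‖ / k)) = 0 ∧
    Real.arctan ‖y 0‖ / k < Real.pi / (2 * k) := by
  have hnorm : ∀ t ∈ Icc 0 T, HasDerivAt (‖y ·‖) (-(k * (1 + ‖y t‖ ^ 2))) t := by
    intro t ht
    have hpos : 0 < ‖y t‖ := norm_pos_iff.mpr (hne t ht)
    convert (hODE t ht).norm_of_smul_self (hne t ht) using 1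
    field_simp
  refine ⟨hnorm, eq_tan_arctan_sub_of_hasDerivAt hnorm, ?_, ?_⟩
  · rw [mul_div_cancel₀ _ hk.ne', sub_self, tan_zero]
  · rw [mul_comm, ← div_div, div_right_comm]
    exact div_lt_div_of_pos_right (arctan_lt_pi_div_two _) hk

/-- Along `ẏ = -k·y·(1/‖y‖ + ‖y‖)` with `y ≠ 0` on `[0,T]`, the norm `r = ‖y‖`
satisfies `ṙ = -k(1+r²)`, has the closed form `r(t) = tan(arctan r(0) - kt)`, and
vanishes exactly at `t* = arctan(r(0))/k < π/(2k)`. -/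
theorem stmt_14 (n : ℕ) (k T : ℝ) (hk : 0 < k) (hT : 0 ≤ T)
    (y : ℝ → EuclideanSpace ℝ (Fin n))
    (hne : ∀ t ∈ Set.Icc (0:ℝ) T, y t ≠ 0)
    (hODE : ∀ t ∈ Set.Icc (0:ℝ) T,
      HasDerivAt y ((-(k * (1 / ‖y t‖ + ‖y t‖))) • y t) t) :
    (∀ t ∈ Set.Icc (0:ℝ) T,
      HasDerivAt (fun s => ‖y s‖) (-(k * (1 + ‖y t‖^2))) t) ∧
    (∀ t ∈ Set.Icc (0:ℝ) T,
      ‖y t‖ = Real.tan (Real.arctan ‖y 0‖ - k * t)) ∧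
    Real.tan (Real.arctan ‖y 0‖ - k * (Real.arctan ‖y 0‖ / k)) = 0 ∧
    Real.arctan ‖y 0‖ / k < Real.pi / (2 * k) :=
  stmt_14_general n k T hk y hne hODE
end

section
/- Consider the ODE system in (z, w) ∈ ℝ^(2n) × ℝ^(2n) given by equation (17): Qż - ẇ = -k·u₁·(1/‖u‖ + ‖u‖) and Wż + Zẇ = -k·u₂·(1/‖u‖ + ‖u‖), where u₁ = Qz - w + q, u₂ = z ⊙ w, u = (u₁, u₂), Z = diag(z), W = diag(w). If the initial condition satisfies u(0) ≠ 0 and k = π/(2T_p), then u(t) = 0 for all t ≥ T_p, i.e., the trajectory satisfies the KKT stationarity and complementarity conditions Qz - w + q = 0 and z ⊙ w = 0 at time T_p. -/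
/-!
For the residual `u = (Qz - w + q, z ⊙ w)` the flow reads `u̇ = -k (1/‖u‖ + ‖u‖) u`, so
`φ = ‖u‖²` obeys `φ̇ = -2k √φ (1 + φ)`. While `φ > 0` this makes `arctan √φ + k t`
nonincreasing; since `arctan √φ(0) < π/2 = k T_p`, `φ` must vanish by time `T_p`, and being
nonincreasing it stays zero afterwards.
-/

open Real Set Matrix

theorem eq_zero_of_hasDerivAt_le_neg_sqrt_mul {φ φ' : ℝ → ℝ} {k : ℝ} (hk : 0 < k)
    (hφ : ∀ t, 0 ≤ t → 0 ≤ φ t) (hderiv : ∀ t, 0 ≤ t → HasDerivAt φ (φ' t) t)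
    (hle : ∀ t, 0 ≤ t → φ' t ≤ -(2 * k) * √(φ t) * (1 + φ t)) :
    ∀ t, π / (2 * k) ≤ t → φ t = 0 := by
  set T := π / (2 * k)
  have hT : 0 < T := by positivity
  have hanti : AntitoneOn φ (Ici 0) := by
    refine antitoneOn_of_hasDerivWithinAt_nonpos (convex_Ici 0)
      (fun t ht => (hderiv t ht).continuousAt.continuousWithinAt)
      (fun t ht => (hderiv t (interior_subset ht)).hasDerivWithinAt) fun t ht => ?_
    have ht : 0 ≤ t := interior_subset ht
    have : 0 ≤ 2 * k * √(φ t) * (1 + φ t) := by have := hφ t ht; positivity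
    linarith [hle t ht]
  suffices hφT : φ T = 0 by
    intro t ht
    exact le_antisymm (hφT ▸ hanti hT.le (hT.le.trans ht) ht) (hφ t (hT.le.trans ht))
  by_contra hφT
  have hpos : ∀ t ∈ Icc 0 T, 0 < φ t := fun t ht =>
    (lt_of_le_of_ne (hφ T hT.le) (Ne.symm hφT)).trans_le (hanti ht.1 hT.le ht.2)
  set g : ℝ → ℝ := fun t => arctan (√(φ t)) + k * t
  have hg : ∀ t ∈ Icc 0 T, HasDerivAt g (1 / (1 + √(φ t) ^ 2) * (φ' t / (2 * √(φ t))) + k) t :=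
    fun t ht => (((hderiv t ht.1).sqrt (hpos t ht).ne').arctan).add
      ((hasDerivAt_id t).const_mul k |>.congr_deriv (mul_one k))
  have hg_nonpos : ∀ t ∈ Icc 0 T, 1 / (1 + √(φ t) ^ 2) * (φ' t / (2 * √(φ t))) + k ≤ 0 := by
    intro t ht
    have hs : 0 < √(φ t) := sqrt_pos.2 (hpos t ht)
    have ha : 0 < 1 + φ t := by linarith [hpos t ht]
    rw [sq_sqrt (hpos t ht).le, one_div_mul_eq_div, div_div, ← le_neg_iff_add_nonpos_right,
      div_le_iff₀ (by positivity)]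
    linarith [hle t ht.1]
  have hganti : AntitoneOn g (Icc 0 T) := by
    refine antitoneOn_of_hasDerivWithinAt_nonpos (convex_Icc 0 T)
      (fun t ht => (hg t ht).continuousAt.continuousWithinAt)
      (fun t ht => (hg t (interior_subset ht)).hasDerivWithinAt)
      fun t ht => hg_nonpos t (interior_subset ht)
  have hgT : g T ≤ g 0 := hganti (left_mem_Icc.2 hT.le) (right_mem_Icc.2 hT.le) hT.le
  have hkT : k * T = π / 2 := by simp only [T]; field_simp
  have : 0 ≤ arctan √(φ T) := arctan_nonneg.2 (sqrt_nonneg _)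
  have := arctan_lt_pi_div_two √(φ 0)
  simp only [g, hkT, mul_zero, add_zero] at hgT
  linarith

theorem eq_zero_of_hasDerivAt_eq_neg_smul {E : Type*} [NormedAddCommGroup E]
    [InnerProductSpace ℝ E] {u u' : ℝ → E} {k : ℝ} (hk : 0 < k)
    (hu : ∀ t, 0 ≤ t → HasDerivAt u (u' t) t)
    (hflow : ∀ t, 0 ≤ t → u t ≠ 0 → u' t = -(k * (1 / ‖u t‖ + ‖u t‖)) • u t) :
    ∀ t, π / (2 * k) ≤ t → u t = 0 := by
  have hsq := eq_zero_of_hasDerivAt_le_neg_sqrt_mul hk (fun t _ => by positivity)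
    (fun t ht => (hu t ht).norm_sq) fun t ht => le_of_eq ?_
  · intro t ht
    simpa using hsq t ht
  rw [sqrt_sq (norm_nonneg _)]
  by_cases h0 : u t = 0
  · simp [h0]
  rw [hflow t ht h0, real_inner_smul_right, real_inner_self_eq_norm_sq]
  have : 0 < ‖u t‖ := norm_pos_iff.2 h0
  field_simp

theorem HasDerivAt.matrix_mulVec {m p : Type*} [Fintype m] [Fintype p]
    (A : Matrix m p ℝ) {f : ℝ → p → ℝ} {f' : p → ℝ} {t : ℝ} (hf : HasDerivAt f f' t) :
    HasDerivAt (fun s => A *ᵥ f s) (A *ᵥ f') t :=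
  (Matrix.mulVecLin A).toContinuousLinearMap.hasFDerivAt.comp_hasDerivAt t hf

theorem hasDerivAt_toLp_sumElim {ι κ : Type*} [Fintype ι] [Fintype κ] {a : ℝ → ι → ℝ}
    {b : ℝ → κ → ℝ} {a' : ι → ℝ} {b' : κ → ℝ} {t : ℝ} (ha : HasDerivAt a a' t)
    (hb : HasDerivAt b b' t) :
    HasDerivAt (fun s => (WithLp.toLp 2 (Sum.elim (a s) (b s)) : EuclideanSpace ℝ (ι ⊕ κ)))
      (WithLp.toLp 2 (Sum.elim a' b')) t := by
  have : HasDerivAt (fun s => Sum.elim (a s) (b s)) (Sum.elim a' b') t := by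
    refine hasDerivAt_pi.2 fun i => ?_
    cases i with
    | inl i => exact hasDerivAt_pi.1 ha i
    | inr i => exact hasDerivAt_pi.1 hb i
  exact (EuclideanSpace.equiv (ι ⊕ κ) ℝ).symm.hasFDerivAt.comp_hasDerivAt t this

theorem norm_toLp_sumElim {ι κ : Type*} [Fintype ι] [Fintype κ] (a : ι → ℝ) (b : κ → ℝ) :
    ‖(WithLp.toLp 2 (Sum.elim a b) : EuclideanSpace ℝ (ι ⊕ κ))‖ =
      √((∑ i, a i ^ 2) + ∑ j, b j ^ 2) := by
  simp [EuclideanSpace.norm_eq, Fintype.sum_sum_type]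

theorem toLp_sumElim_eq_zero {ι κ : Type*} {a : ι → ℝ} {b : κ → ℝ} :
    (WithLp.toLp 2 (Sum.elim a b) : EuclideanSpace ℝ (ι ⊕ κ)) = 0 ↔ a = 0 ∧ b = 0 := by
  rw [WithLp.toLp_eq_zero, ← Sum.elim_zero_zero, Sum.elim_eq_iff]

theorem stmt_15_general (n : ℕ) (Q : Matrix (Fin (2*n)) (Fin (2*n)) ℝ)
    (q : Fin (2*n) → ℝ) (Tp k : ℝ) (hTp : 0 < Tp) (hk : k = Real.pi / (2 * Tp))
    (z w z' w' : ℝ → Fin (2*n) → ℝ)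
    (hz : ∀ t, 0 ≤ t → HasDerivAt z (z' t) t)
    (hw : ∀ t, 0 ≤ t → HasDerivAt w (w' t) t)
    -- u₁, u₂ and ‖u‖ at time t:
    (hflow : ∀ t, 0 ≤ t →
      (Q.mulVec (z t) - w t + q ≠ 0 ∨ (fun i => z t i * w t i) ≠ 0) →
      (Q.mulVec (z' t) - w' t =
        (-(k * (1 / Real.sqrt ((∑ i, (Q.mulVec (z t) - w t + q) i ^ 2)
            + ∑ i, (z t i * w t i)^2)
          + Real.sqrt ((∑ i, (Q.mulVec (z t) - w t + q) i ^ 2)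
            + ∑ i, (z t i * w t i)^2)))) • (Q.mulVec (z t) - w t + q) ∧
      (fun i => w t i * z' t i + z t i * w' t i) =
        (-(k * (1 / Real.sqrt ((∑ i, (Q.mulVec (z t) - w t + q) i ^ 2)
            + ∑ i, (z t i * w t i)^2)
          + Real.sqrt ((∑ i, (Q.mulVec (z t) - w t + q) i ^ 2)
            + ∑ i, (z t i * w t i)^2)))) • (fun i => z t i * w t i))) :
    ∀ t, Tp ≤ t →
      Q.mulVec (z t) - w t + q = 0 ∧ ∀ i, z t i * w t i = 0 := by
  have hk0 : 0 < k := hk ▸ by positivity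
  have hu₁ : ∀ t, 0 ≤ t → HasDerivAt (fun s => Q *ᵥ z s - w s + q) (Q *ᵥ z' t - w' t) t :=
    fun t ht => ((HasDerivAt.matrix_mulVec Q (hz t ht)).sub (hw t ht)).add_const q
  have hu₂ : ∀ t, 0 ≤ t → HasDerivAt (fun s i => z s i * w s i)
      (fun i => w t i * z' t i + z t i * w' t i) t := fun t ht =>
    ((hz t ht).mul (hw t ht)).congr_deriv <| by
      ext; simp only [Pi.add_apply, Pi.mul_apply, mul_comm]
  have hzero := eq_zero_of_hasDerivAt_eq_neg_smul hk0
    (fun t ht => hasDerivAt_toLp_sumElim (hu₁ t ht) (hu₂ t ht)) fun t ht hne => by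
      obtain ⟨h₁, h₂⟩ := hflow t ht (not_and_or.1 (mt toLp_sumElim_eq_zero.2 hne))
      rw [norm_toLp_sumElim, h₁, h₂, ← WithLp.toLp_smul]
      congr 1
      ext (i | i) <;> rfl
  intro t ht
  have hTk : Tp = π / (2 * k) := by rw [hk]; field_simp
  obtain ⟨h₁, h₂⟩ := toLp_sumElim_eq_zero.1 (hzero t (hTk ▸ ht))
  exact ⟨h₁, congrFun h₂⟩

/-- The KKT flow (17): with `u₁ = Qz - w + q`, `u₂ = z ⊙ w`,
`Qż - ẇ = -k u₁ (1/‖u‖ + ‖u‖)` and `Wż + Zẇ = -k u₂ (1/‖u‖ + ‖u‖)`,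
`k = π/(2 T_p)`, the trajectory satisfies `Qz - w + q = 0` and `z ⊙ w = 0`
for all `t ≥ T_p`. -/
theorem stmt_15 (n : ℕ) (Q : Matrix (Fin (2*n)) (Fin (2*n)) ℝ) (hQ : Q.PosDef)
    (q : Fin (2*n) → ℝ) (Tp k : ℝ) (hTp : 0 < Tp) (hk : k = Real.pi / (2 * Tp))
    (z w z' w' : ℝ → Fin (2*n) → ℝ)
    (hz : ∀ t, 0 ≤ t → HasDerivAt z (z' t) t)
    (hw : ∀ t, 0 ≤ t → HasDerivAt w (w' t) t)
    -- u₁, u₂ and ‖u‖ at time t: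
    (hflow : ∀ t, 0 ≤ t →
      (Q.mulVec (z t) - w t + q ≠ 0 ∨ (fun i => z t i * w t i) ≠ 0) →
      (Q.mulVec (z' t) - w' t =
        (-(k * (1 / Real.sqrt ((∑ i, (Q.mulVec (z t) - w t + q) i ^ 2)
            + ∑ i, (z t i * w t i)^2)
          + Real.sqrt ((∑ i, (Q.mulVec (z t) - w t + q) i ^ 2)
            + ∑ i, (z t i * w t i)^2)))) • (Q.mulVec (z t) - w t + q) ∧
      (fun i => w t i * z' t i + z t i * w' t i) =
        (-(k * (1 / Real.sqrt ((∑ i, (Q.mulVec (z t) - w t + q) i ^ 2)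
            + ∑ i, (z t i * w t i)^2)
          + Real.sqrt ((∑ i, (Q.mulVec (z t) - w t + q) i ^ 2)
            + ∑ i, (z t i * w t i)^2)))) • (fun i => z t i * w t i)))
    (hstat : ∀ t, 0 ≤ t →
      (Q.mulVec (z t) - w t + q = 0 ∧ (fun i => z t i * w t i) = 0) →
      (Q.mulVec (z' t) - w' t = 0 ∧
        (fun i => w t i * z' t i + z t i * w' t i) = 0))
    (hinit : Q.mulVec (z 0) - w 0 + q ≠ 0 ∨ (fun i => z 0 i * w 0 i) ≠ 0) :
    ∀ t, Tp ≤ t →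
      Q.mulVec (z t) - w t + q = 0 ∧ ∀ i, z t i * w t i = 0 :=
  stmt_15_general n Q q Tp k hTp hk z w z' w' hz hw hflow
end
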